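/- Fix an integer k ≥ 1. The generating function of the longest-run probabilities satisfies, in the ring of formal power series ℝ⟦X⟧, (1 − X)·∑_{n≥0} P(L_n = k)·X^n = ∑_{v≥0} P(V(k) = v)·X^v − ∑_{v≥0} P(V(k+1) = v)·X^v. -/

import Mathlib

/-!
For `k ≥ 1`, the longest success run among the first `n` trials has length at least `k` exactly
when the first run of `k` successes is completed by time `n`, i.e. `1 ≤ V(k) ≤ n`. Hence
`P(L_n = k) = P(V(k) ≤ n) - P(V(k+1) ≤ n)` is a difference of partial sums of the two
waiting-time distributions, and multiplying a generating function of partial sums by `1 - X`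
recovers the terms. The only subtlety is the event that no `k`-run ever occurs, where
`waitingTime` takes the junk value `sInf ∅ = 0`: it is contained in the event that none of the
first `N` disjoint blocks of length `k` consists of successes, which has probability
`(1 - p ^ k) ^ N → 0`.
-/

open MeasureTheory Finset PowerSeries

/-- Waiting time for the first success run of length `k`: the smallest `n ≥ k` such that
trials `n - k + 1, …, n` are all successes (trials are indexed from `1`). -/
noncomputable def waitingTime (k : ℕ) (ω : ℕ → Bool) : ℕ :=
  sInf {n | k ≤ n ∧ ∀ i ∈ Finset.Icc (n - k + 1) n, ω i = true}

/-- Length of the longest run of consecutive successes among trials `1, …, n`. -/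
noncomputable def longestRun (n : ℕ) (ω : ℕ → Bool) : ℕ :=
  sSup {m | ∃ j, j + m ≤ n ∧ ∀ i ∈ Finset.Ioc j (j + m), ω i = true}

theorem PowerSeries.one_sub_X_mul_mk_sum_range {R : Type*} [CommRing R] (f : ℕ → R) :
    (1 - X) * mk (fun n => ∑ i ∈ range (n + 1), f i) = mk f := by
  ext (_ | n)
  · simp
  · simp [sub_mul, coeff_succ_X_mul, sum_range_succ]

theorem Nat.sInf_eq_iff {s : Set ℕ} {v : ℕ} :
    sInf s = v ↔ (v ∈ s ∨ s = ∅ ∧ v = 0) ∧ ∀ u < v, u ∉ s := by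
  rcases s.eq_empty_or_nonempty with rfl | hs
  · simp [eq_comm]
  · constructor
    · rintro rfl
      exact ⟨.inl (Nat.sInf_mem hs), fun u hu => Nat.notMem_of_lt_sInf hu⟩
    · rintro ⟨hv | ⟨hempty, -⟩, hmin⟩
      · exact (Nat.sInf_le hv).antisymm (not_lt.1 fun hlt => hmin _ hlt (Nat.sInf_mem hs))
      · exact absurd hempty hs.ne_empty

theorem measurable_sInf_setOf {α : Type*} [MeasurableSpace α] {p : ℕ → α → Prop}
    (hp : ∀ n, Measurable (p n)) : Measurable fun x => sInf {n | p n x} := by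
  refine measurable_to_countable' fun v => ?_
  simp only [Set.preimage, Set.mem_singleton_iff, Nat.sInf_eq_iff, Set.eq_empty_iff_forall_notMem,
    Set.mem_ofPred_eq]
  exact measurableSet_setOfPred.2 (by fun_prop)

def allTrueOn (s : Finset ℕ) : Set (ℕ → Bool) := {ω | ∀ i ∈ s, ω i = true}

theorem measurableSet_allTrueOn (s : Finset ℕ) : MeasurableSet (allTrueOn s) :=
  measurableSet_setOfPred.2 (by fun_prop)

theorem measurable_waitingTime (k : ℕ) : Measurable (waitingTime k) :=
  measurable_sInf_setOf fun n => by fun_prop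

theorem le_longestRun_iff {m n : ℕ} {ω : ℕ → Bool} :
    m ≤ longestRun n ω ↔ ∃ j, j + m ≤ n ∧ ω ∈ allTrueOn (Ioc j (j + m)) := by
  set S := {m | ∃ j, j + m ≤ n ∧ ∀ i ∈ Ioc j (j + m), ω i = true}
  have hbdd : BddAbove S := ⟨n, fun _ ⟨_, hj, _⟩ => by omega⟩
  have hdown : ∀ a b, a ≤ b → b ∈ S → a ∈ S := by
    rintro a b hab ⟨j, hj, hrun⟩
    exact ⟨j, by omega, fun i hi => hrun i (Ioc_subset_Ioc_right (by omega) hi)⟩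
  exact ⟨fun h => hdown m _ h (Nat.sSup_mem ⟨0, 0, by simp⟩ hbdd), fun h => le_csSup hbdd h⟩

theorem measurableSet_le_longestRun (m n : ℕ) : MeasurableSet {ω | m ≤ longestRun n ω} := by
  simp only [le_longestRun_iff]
  exact measurableSet_setOfPred.2 (by fun_prop (disch := exact measurableSet_allTrueOn _))

theorem le_longestRun_iff_waitingTime_mem {k n : ℕ} (hk : 1 ≤ k) {ω : ℕ → Bool} :
    k ≤ longestRun n ω ↔ waitingTime k ω ∈ Icc 1 n := by
  set S := {n | k ≤ n ∧ ∀ i ∈ Finset.Icc (n - k + 1) n, ω i = true}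
  have hend : ∀ j, j + k ∈ S ↔ ω ∈ allTrueOn (Ioc j (j + k)) := fun j => by
    simp [S, allTrueOn, Finset.Icc_add_one_left_eq_Ioc]
  have hV : waitingTime k ω = sInf S := rfl
  rw [le_longestRun_iff, hV, mem_Icc]
  constructor
  · rintro ⟨j, hj, hrun⟩
    have hmem : j + k ∈ S := (hend j).2 hrun
    have hkV : k ≤ sInf S := (Nat.sInf_mem ⟨_, hmem⟩).1
    exact ⟨by omega, (Nat.sInf_le hmem).trans hj⟩
  · rintro ⟨hV0, hVn⟩
    have hmem : sInf S ∈ S := Nat.sInf_mem (Nat.nonempty_of_pos_sInf hV0)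
    have hkV : k ≤ sInf S := hmem.1
    refine ⟨sInf S - k, by omega, (hend _).1 ?_⟩
    rwa [Nat.sub_add_cancel hkV]

theorem setOf_le_longestRun_eq {k n : ℕ} (hk : 1 ≤ k) :
    {ω | k ≤ longestRun n ω} = {ω | waitingTime k ω ≤ n} \ {ω | waitingTime k ω = 0} := by
  ext ω
  simp only [le_longestRun_iff_waitingTime_mem hk, mem_Icc, Set.mem_sdiff, Set.mem_ofPred_eq]
  omega

def prefixCylinder (n : ℕ) (b : ℕ → Bool) : Set (ℕ → Bool) :=
  {ω | ∀ i, 1 ≤ i → i ≤ n → ω i = b i}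

theorem prefixCylinder_zero (b : ℕ → Bool) : prefixCylinder 0 b = Set.univ :=
  Set.eq_univ_of_forall fun _ i h1 h0 => absurd h0 (by omega)

def IsBernoulliMeasure (p : ℝ) (μ : Measure (ℕ → Bool)) : Prop :=
  ∀ (n : ℕ) (b : ℕ → Bool),
    μ (prefixCylinder n b) = ENNReal.ofReal (∏ i ∈ Icc 1 n, if b i = true then p else 1 - p)

theorem measurableSet_prefixCylinder (n : ℕ) (b : ℕ → Bool) :
    MeasurableSet (prefixCylinder n b) :=
  measurableSet_setOfPred.2 (by fun_prop)

theorem prefixCylinder_inter_allTrueOn (n m : ℕ) (b : ℕ → Bool) :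
    prefixCylinder n b ∩ allTrueOn (Ioc n (n + m))
      = prefixCylinder (n + m) (fun i => if i ≤ n then b i else true) := by
  ext ω
  simp only [prefixCylinder, allTrueOn, Set.mem_inter_iff, Set.mem_ofPred_eq, mem_Ioc]
  constructor
  · rintro ⟨hb, ht⟩ i h1 h2
    split_ifs with h
    · exact hb i h1 h
    · exact ht i ⟨by omega, h2⟩
  · intro h
    exact ⟨fun i h1 h2 => by simpa [h2] using h i h1 (by omega),
      fun i hi => by simpa [hi.1.not_ge] using h i (by omega) hi.2⟩

open Classical in
theorem measure_inter_eq_sum_prefixCylinder (μ : Measure (ℕ → Bool)) {E A : Set (ℕ → Bool)}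
    {n : ℕ} (hE : DependsOn (· ∈ E) (Icc 1 n : Set ℕ)) (hA : MeasurableSet A) :
    μ (E ∩ A) = ∑ s ∈ (Icc 1 n).powerset.filter (fun s => (fun i => decide (i ∈ s)) ∈ E),
      μ (prefixCylinder n (fun i => decide (i ∈ s)) ∩ A) := by
  set F := (Icc 1 n).powerset.filter (fun s => (fun i => decide (i ∈ s)) ∈ E)
  set cyl := fun s : Finset ℕ => prefixCylinder n (fun i => decide (i ∈ s))
  have hmem_cyl (ω : ℕ → Bool) (s : Finset ℕ) :
      ω ∈ cyl s ↔ ∀ i ∈ (Icc 1 n : Set ℕ), ω i = decide (i ∈ s) := by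
    simp [cyl, prefixCylinder]
  have hE_eq : E = ⋃ s ∈ F, cyl s := by
    ext ω
    simp only [Set.mem_iUnion, F, mem_filter, mem_powerset, exists_prop]
    constructor
    · intro hω
      have hagree :
          ∀ i ∈ (Icc 1 n : Set ℕ), ω i = decide (i ∈ (Icc 1 n).filter (ω · = true)) := by
        intro i hi
        simp_all
      exact ⟨_, ⟨filter_subset _ _, (hE hagree).mp hω⟩, (hmem_cyl _ _).2 hagree⟩
    · rintro ⟨s, ⟨-, hs⟩, hω⟩
      exact (hE ((hmem_cyl ω s).1 hω)).mpr hs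
  have hdisj : Set.PairwiseDisjoint ↑F cyl := by
    intro s hs t ht hst
    simp only [F, coe_filter, mem_powerset, Set.mem_ofPred_eq] at hs ht
    refine Set.disjoint_left.2 fun ω hωs hωt => hst ?_
    ext i
    by_cases hi : i ∈ Icc 1 n
    · simpa using ((hmem_cyl ω s).1 hωs i hi).symm.trans ((hmem_cyl ω t).1 hωt i hi)
    · exact iff_of_false (fun h => hi (hs.1 h)) (fun h => hi (ht.1 h))
  conv_lhs => rw [hE_eq, Set.iUnion₂_inter]
  exact measure_biUnion_finset (hdisj.mono fun _ => Set.inter_subset_left)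
    fun _ _ => (measurableSet_prefixCylinder _ _).inter hA

def noFullBlock (m N : ℕ) : Set (ℕ → Bool) :=
  ⋂ j < N, (allTrueOn (Ioc (j * m) (j * m + m)))ᶜ

theorem dependsOn_mem_noFullBlock (m N : ℕ) :
    DependsOn (· ∈ noFullBlock m N) (Icc 1 (N * m) : Set ℕ) := by
  intro ω ω' h
  simp only [noFullBlock, allTrueOn, Set.mem_iInter, Set.mem_compl_iff, Set.mem_ofPred_eq,
    eq_iff_iff]
  refine forall₂_congr fun j hj => not_congr (forall₂_congr fun i hi => ?_)
  have hjN : j * m + m ≤ N * m := by nlinarith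
  rw [mem_Ioc] at hi
  rw [h i (by simp only [coe_Icc, Set.mem_Icc]; omega)]

section Bernoulli

variable {p : ℝ} {μ : Measure (ℕ → Bool)}

theorem IsBernoulliMeasure.isProbabilityMeasure (hμ : IsBernoulliMeasure p μ) :
    IsProbabilityMeasure μ :=
  ⟨by simpa [prefixCylinder_zero] using hμ 0 fun _ => true⟩

theorem IsBernoulliMeasure.measure_prefixCylinder_inter_allTrueOn (hμ : IsBernoulliMeasure p μ)
    (hp : 0 ≤ p) (n m : ℕ) (b : ℕ → Bool) :
    μ (prefixCylinder n b ∩ allTrueOn (Ioc n (n + m)))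
      = μ (prefixCylinder n b) * ENNReal.ofReal (p ^ m) := by
  have hIcc (N : ℕ) : Icc 1 N = Ioc 0 N := Icc_add_one_left_eq_Ioc 0 N
  rw [prefixCylinder_inter_allTrueOn, hμ, hμ,
    ← ENNReal.ofReal_mul' (pow_nonneg hp m), hIcc, hIcc,
    ← prod_Ioc_consecutive _ (Nat.zero_le n) (n.le_add_right m)]
  congr 2
  · exact prod_congr rfl fun i hi => by simp [(mem_Ioc.1 hi).2]
  · rw [prod_eq_pow_card (b := p) fun i hi => by simp [(mem_Ioc.1 hi).1.not_ge], Nat.card_Ioc,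
      Nat.add_sub_cancel_left]

theorem IsBernoulliMeasure.measure_inter_allTrueOn (hμ : IsBernoulliMeasure p μ) (hp : 0 ≤ p)
    {E : Set (ℕ → Bool)} {n : ℕ} (hE : DependsOn (· ∈ E) (Icc 1 n : Set ℕ)) (m : ℕ) :
    μ (E ∩ allTrueOn (Ioc n (n + m))) = μ E * ENNReal.ofReal (p ^ m) := by
  have hμE := measure_inter_eq_sum_prefixCylinder μ hE .univ
  simp only [Set.inter_univ] at hμE
  rw [measure_inter_eq_sum_prefixCylinder μ hE (measurableSet_allTrueOn _), hμE, sum_mul]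
  simp only [hμ.measure_prefixCylinder_inter_allTrueOn hp]

theorem IsBernoulliMeasure.measure_noFullBlock (hμ : IsBernoulliMeasure p μ) (hp : 0 ≤ p)
    (m N : ℕ) : μ (noFullBlock m N) = (1 - ENNReal.ofReal (p ^ m)) ^ N := by
  have := hμ.isProbabilityMeasure
  induction N with
  | zero => simp [noFullBlock]
  | succ N ih =>
    have hsucc :
        noFullBlock m (N + 1) = noFullBlock m N \ allTrueOn (Ioc (N * m) (N * m + m)) := by
      simp only [noFullBlock, Set.biInter_lt_succ, Set.sdiff_eq]
    have hsplit := measure_sdiff_add_inter (μ := μ) (noFullBlock m N)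
      (measurableSet_allTrueOn (Ioc (N * m) (N * m + m)))
    rw [hμ.measure_inter_allTrueOn hp (dependsOn_mem_noFullBlock m N)] at hsplit
    rw [hsucc, ENNReal.eq_sub_of_add_eq (by finiteness) hsplit, ih, pow_succ,
      ENNReal.mul_sub fun _ _ => by finiteness, mul_one]

theorem IsBernoulliMeasure.measure_waitingTime_eq_zero (hμ : IsBernoulliMeasure p μ)
    (hp : 0 < p) {k : ℕ} (hk : 1 ≤ k) : μ {ω | waitingTime k ω = 0} = 0 := by
  have hsub (N : ℕ) : {ω | waitingTime k ω = 0} ⊆ noFullBlock k N := by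
    intro ω hω
    simp only [noFullBlock, Set.mem_iInter, Set.mem_compl_iff]
    intro j _ hrun
    have := (le_longestRun_iff_waitingTime_mem hk).1 (le_longestRun_iff.2 ⟨j * k, le_rfl, hrun⟩)
    simp_all
  have hlt : 1 - ENNReal.ofReal (p ^ k) < 1 :=
    ENNReal.sub_lt_self ENNReal.one_ne_top one_ne_zero (ENNReal.ofReal_pos.2 (pow_pos hp k)).ne'
  exact le_zero_iff.1 <| ge_of_tendsto' (ENNReal.tendsto_pow_atTop_nhds_zero_of_lt_one hlt)
    fun N => (measure_mono (hsub N)).trans (hμ.measure_noFullBlock hp.le k N).le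

end Bernoulli

section FiniteMeasure

variable {μ : Measure (ℕ → Bool)} [IsFiniteMeasure μ]

theorem measureReal_longestRun_eq (k n : ℕ) :
    μ.real {ω | longestRun n ω = k}
      = μ.real {ω | k ≤ longestRun n ω} - μ.real {ω | k + 1 ≤ longestRun n ω} := by
  have hsub : {ω | k + 1 ≤ longestRun n ω} ⊆ {ω | k ≤ longestRun n ω} :=
    fun _ => Nat.le_of_succ_le
  rw [← measureReal_sdiff hsub (measurableSet_le_longestRun _ _)]
  congr 1
  ext ω
  simp only [Set.mem_sdiff, Set.mem_ofPred_eq]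
  omega

theorem measureReal_le_longestRun {k : ℕ} (hk : 1 ≤ k) (h0 : μ {ω | waitingTime k ω = 0} = 0)
    (n : ℕ) :
    μ.real {ω | k ≤ longestRun n ω}
      = ∑ v ∈ range (n + 1), μ.real {ω | waitingTime k ω = v} := by
  rw [setOf_le_longestRun_eq hk, measureReal_sdiff_null (by simp [measureReal_def, h0])]
  have hsum := sum_measureReal_preimage_singleton (μ := μ) (range (n + 1))
    fun v _ => measurable_waitingTime k (measurableSet_singleton v)
  have hset : {ω | waitingTime k ω ≤ n} = waitingTime k ⁻¹' ↑(range (n + 1)) := by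
    ext ω
    simp
  rw [hset, ← hsum]
  rfl

end FiniteMeasure

theorem stmt14_general (p : ℝ) (hp0 : 0 < p) (k : ℕ) (hk : 1 ≤ k)
    (μ : Measure (ℕ → Bool)) [IsProbabilityMeasure μ]
    (hμ : ∀ (n : ℕ) (b : ℕ → Bool),
      μ {ω | ∀ i, 1 ≤ i → i ≤ n → ω i = b i}
        = ENNReal.ofReal (∏ i ∈ Finset.Icc 1 n, if b i = true then p else 1 - p)) :
    (1 - PowerSeries.X) *
        PowerSeries.mk (fun n => (μ {ω | longestRun n ω = k}).toReal)
      = PowerSeries.mk (fun v => (μ {ω | waitingTime k ω = v}).toReal)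
        - PowerSeries.mk (fun v => (μ {ω | waitingTime (k + 1) ω = v}).toReal) := by
  have hV {m : ℕ} (hm : 1 ≤ m) : μ {ω | waitingTime m ω = 0} = 0 :=
    IsBernoulliMeasure.measure_waitingTime_eq_zero hμ hp0 hm
  have hL : mk (fun n => (μ {ω | longestRun n ω = k}).toReal)
      = mk (fun n => ∑ v ∈ range (n + 1), μ.real {ω | waitingTime k ω = v})
        - mk (fun n => ∑ v ∈ range (n + 1), μ.real {ω | waitingTime (k + 1) ω = v}) := by
    ext n
    rw [map_sub, coeff_mk, coeff_mk, coeff_mk, ← measureReal_def, measureReal_longestRun_eq,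
      measureReal_le_longestRun hk (hV hk), measureReal_le_longestRun (by omega) (hV (by omega))]
  rw [hL, mul_sub, one_sub_X_mul_mk_sum_range, one_sub_X_mul_mk_sum_range]
  rfl

theorem stmt14 (p : ℝ) (hp0 : 0 < p) (hp1 : p < 1) (k : ℕ) (hk : 1 ≤ k)
    (μ : Measure (ℕ → Bool)) [IsProbabilityMeasure μ]
    (hμ : ∀ (n : ℕ) (b : ℕ → Bool),
      μ {ω | ∀ i, 1 ≤ i → i ≤ n → ω i = b i}
        = ENNReal.ofReal (∏ i ∈ Finset.Icc 1 n, if b i = true then p else 1 - p)) :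
    (1 - PowerSeries.X) *
        PowerSeries.mk (fun n => (μ {ω | longestRun n ω = k}).toReal)
      = PowerSeries.mk (fun v => (μ {ω | waitingTime k ω = v}).toReal)
        - PowerSeries.mk (fun v => (μ {ω | waitingTime (k + 1) ω = v}).toReal) :=
  stmt14_general p hp0 k hk μ hμ
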